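/- arXiv:2605.21896 — 8 statements merged into one kernel-verified Lean document; each statement's English description precedes it below -/
import Mathlib

section
/- Let p, q be relatively prime positive integers and a ∈ (0,1) with a ∉ {1/p, 2/p, ..., (p-1)/p}. Define x_k = 2k·q/p + a for k ∈ {0,1,...,p-1}. If k, l ∈ {0,1,...,p-1} satisfy ⌊x_k⌋ ≡ ⌊x_l⌋ (mod 2) and frac(x_k) = frac(x_l), then k = l. -/
open Set

theorem stmt0 (p q : ℕ) (hp : 0 < p) (hq : 0 < q) (hpq : Nat.Coprime p q)
    (a : ℝ) (ha : a ∈ Ioo (0:ℝ) 1)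
    (hns : ∀ i : ℕ, 0 < i → i < p → a ≠ (i : ℝ) / p)
    (x : ℕ → ℝ) (hx : ∀ k, x k = 2 * k * q / p + a)
    (k l : ℕ) (hk : k < p) (hl : l < p)
    (hpar : ⌊x k⌋ % 2 = ⌊x l⌋ % 2)
    (hfr : Int.fract (x k) = Int.fract (x l)) :
    k = l := by
  have hp0 : (0:ℝ) < p := by exact_mod_cast hp
  have hpne : (p:ℝ) ≠ 0 := ne_of_gt hp0
  set m : ℤ := ⌊x k⌋ - ⌊x l⌋ with hm
  have hmpar : m % 2 = 0 := by omega
  have hdiff : x k - x l = (m : ℝ) := by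
    have h1 : x k - ⌊x k⌋ = x l - ⌊x l⌋ := by
      simp only [Int.fract] at hfr
      linarith
    have h1' := h1
    push_cast [hm]
    linarith
  have hdiff2 : x k - x l = (2 * ((k:ℝ) - l) * q) / p := by
    rw [hx, hx]; field_simp; ring
  have heqR : 2 * ((k:ℝ) - l) * q = m * p := by
    rw [hdiff2] at hdiff
    field_simp at hdiff
    linarith
  have heqZ : 2 * ((k:ℤ) - l) * q = m * p := by exact_mod_cast heqR
  have hco : IsCoprime (p:ℤ) (q:ℤ) := by
    rw [Int.isCoprime_iff_gcd_eq_one]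
    simpa using hpq
  have hdvd : (p:ℤ) ∣ 2 * ((k:ℤ) - l) * q := ⟨m, by linarith [heqZ, mul_comm m (p:ℤ)]⟩
  have hdvd2 : (p:ℤ) ∣ 2 * ((k:ℤ) - l) := hco.dvd_of_dvd_mul_right hdvd
  obtain ⟨c, hc⟩ := hdvd2
  have hpz : (0:ℤ) < (p:ℤ) := by exact_mod_cast hp
  have h1 : (p:ℤ) * c < (p:ℤ) * 2 := by
    rw [← hc]; push_cast; omega
  have h2 : (p:ℤ) * (-2) < (p:ℤ) * c := by
    rw [← hc]; push_cast; omega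
  have hcu : c < 2 := lt_of_mul_lt_mul_left h1 (le_of_lt hpz)
  have hcl : -2 < c := lt_of_mul_lt_mul_left h2 (le_of_lt hpz)
  have hc3 : c = -1 ∨ c = 0 ∨ c = 1 := by omega
  rcases hc3 with h | h | h
  · exfalso
    subst h
    -- 2*(k-l) = -p, so p even and m = -q
    have hqodd : q % 2 = 1 := by
      rcases Nat.even_or_odd q with he | ho
      · exfalso
        have h2p : 2 ∣ p := by
          have : (2:ℤ) ∣ (p:ℤ) := ⟨-((k:ℤ) - l), by linarith [hc]⟩
          exact_mod_cast this
        have h2q : 2 ∣ q := he.two_dvd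
        have := Nat.dvd_gcd h2p h2q
        rw [hpq] at this
        omega
      · exact Nat.odd_iff.mp ho
    have hmq : m = -q := by
      have : m * (p:ℤ) = (-q) * (p:ℤ) := by rw [← heqZ, hc]; ring
      exact mul_right_cancel₀ (ne_of_gt hpz) this
    omega
  · subst h
    have : (k:ℤ) = l := by simp at hc; omega
    exact_mod_cast this
  · exfalso
    subst h
    have hqodd : q % 2 = 1 := by
      rcases Nat.even_or_odd q with he | ho
      · exfalso
        have h2p : 2 ∣ p := by
          have : (2:ℤ) ∣ (p:ℤ) := ⟨(k:ℤ) - l, by linarith [hc]⟩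
          exact_mod_cast this
        have h2q : 2 ∣ q := he.two_dvd
        have := Nat.dvd_gcd h2p h2q
        rw [hpq] at this
        omega
      · exact Nat.odd_iff.mp ho
    have hmq : m = q := by
      have : m * (p:ℤ) = (q:ℤ) * (p:ℤ) := by rw [← heqZ, hc]; ring
      exact mul_right_cancel₀ (ne_of_gt hpz) this
    omega
end

section
/- Let p, q be relatively prime positive integers and a ∈ (0,1) with pa ∉ ℤ. Define x_k = 2k·q/p + a for k ∈ {0,1,...,p-1}, and define the projection π(x) = frac(x) if ⌊x⌋ is even and π(x) = 1 - frac(x) if ⌊x⌋ is odd. Then the p values π(x_0), π(x_1), ..., π(x_{p-1}) are pairwise distinct. -/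
open Set

/-- The folding of the first coordinate: `fract x` if `⌊x⌋` is even, `1 - fract x` otherwise. -/
noncomputable def proj (x : ℝ) : ℝ := if Even ⌊x⌋ then Int.fract x else 1 - Int.fract x

lemma proj_eq_cases (x y : ℝ) (h : proj x = proj y) :
    (∃ n : ℤ, x - y = 2 * n) ∨ (∃ n : ℤ, x + y = 2 * n) := by
  unfold proj at h
  have hx' := Int.floor_add_fract x
  have hy' := Int.floor_add_fract y
  rcases Int.even_or_odd ⌊x⌋ with hex | hox <;>
    rcases Int.even_or_odd ⌊y⌋ with hey | hoy
  · rw [if_pos hex, if_pos hey] at h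
    obtain ⟨m, hm⟩ := hex; obtain ⟨n, hn⟩ := hey
    left; exact ⟨m - n, by push_cast [hm, hn] at hx' hy' ⊢; linarith⟩
  · rw [if_pos hex, if_neg (Int.not_even_iff_odd.mpr hoy)] at h
    obtain ⟨m, hm⟩ := hex; obtain ⟨n, hn⟩ := hoy
    right; exact ⟨m + n + 1, by push_cast [hm, hn] at hx' hy' ⊢; linarith⟩
  · rw [if_neg (Int.not_even_iff_odd.mpr hox), if_pos hey] at h
    obtain ⟨m, hm⟩ := hox; obtain ⟨n, hn⟩ := hey
    right; exact ⟨m + n + 1, by push_cast [hm, hn] at hx' hy' ⊢; linarith⟩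
  · rw [if_neg (Int.not_even_iff_odd.mpr hox), if_neg (Int.not_even_iff_odd.mpr hoy)] at h
    obtain ⟨m, hm⟩ := hox; obtain ⟨n, hn⟩ := hoy
    left; exact ⟨m - n, by push_cast [hm, hn] at hx' hy' ⊢; linarith⟩

theorem stmt2 (p q : ℕ) (hp : 0 < p) (hq : 0 < q) (hpq : Nat.Coprime p q)
    (a : ℝ) (ha : a ∈ Ioo (0:ℝ) 1) (hns : ¬ ∃ m : ℤ, (p : ℝ) * a = m)
    (x : ℕ → ℝ) (hx : ∀ k, x k = 2 * k * q / p + a)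
    (k l : ℕ) (hk : k < p) (hl : l < p)
    (h : proj (x k) = proj (x l)) :
    k = l := by
  have hp0 : (p : ℝ) ≠ 0 := Nat.cast_ne_zero.mpr hp.ne'
  rw [hx k, hx l] at h
  rcases proj_eq_cases _ _ h with ⟨n, hn⟩ | ⟨n, hn⟩
  · -- 2kq/p - 2lq/p = 2n
    have hr : ((k : ℝ) * q - l * q) = n * p := by
      field_simp at hn; nlinarith [hn]
    have hz : ((k : ℤ) * q - l * q) = n * p := by exact_mod_cast hr
    have hdvd : (p : ℤ) ∣ ((k : ℤ) - l) * q := ⟨n, by linarith [hz, sub_mul (k:ℤ) l q]⟩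
    have hcop : IsCoprime (p : ℤ) (q : ℤ) := Int.isCoprime_iff_gcd_eq_one.mpr hpq
    have hdvd2 : (p : ℤ) ∣ (k : ℤ) - l := hcop.dvd_of_dvd_mul_right hdvd
    have habs : |(k : ℤ) - l| < p := by
      rw [abs_sub_lt_iff]; constructor <;> push_cast <;> omega
    have := Int.eq_zero_of_abs_lt_dvd hdvd2 habs
    omega
  · -- 2kq/p + 2lq/p + 2a = 2n
    exact absurd ⟨n * p - (k + l) * q, by push_cast; field_simp at hn ⊢; linarith⟩ hns
end

section
/- Let p, q be relatively prime positive integers and a ∈ (0,1) with pa ∉ ℤ. Define x_k = 2k·q/p + a for k ∈ {0,...,p-1} and let π(x) = frac(x) if ⌊x⌋ is even, π(x) = 1 - frac(x) if ⌊x⌋ is odd. Then for each i ∈ {0,1,...,p-1}, the open interval (i/p, (i+1)/p) contains exactly one of the values π(x_0), ..., π(x_{p-1}). -/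
open Set

private lemma proj_add_two_int (y : ℝ) (n : ℤ) : proj (y + 2 * n) = proj y := by
  have h : (2:ℝ) * n = ((2 * n : ℤ) : ℝ) := by push_cast; ring
  unfold proj
  rw [h, Int.fract_add_intCast, Int.floor_add_intCast]
  have he : Even (⌊y⌋ + 2 * n) ↔ Even ⌊y⌋ := by simp [Int.even_add]
  simp only [he]

private lemma ioo_iff (c i : ℤ) (β : ℝ) (h0 : 0 < β) (h1 : β < 1) :
    ((i:ℝ) < c + β ∧ (c:ℝ) + β < i + 1) ↔ c = i := by
  constructor
  · rintro ⟨h, h'⟩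
    have h2 : (i:ℝ) < (c:ℝ) + 1 := by linarith
    have h3 : (c:ℝ) < (i:ℝ) + 1 := by linarith
    have h4 : i < c + 1 := by exact_mod_cast h2
    have h5 : c < i + 1 := by exact_mod_cast h3
    omega
  · rintro rfl
    constructor <;> linarith

private lemma exists_unique_r (p i : ℕ) (m : ℤ) (hp : 0 < p) (hi : i < p)
    (hm0 : 0 ≤ m) (hmp : m < p) :
    ∃! r : ℕ, r < p ∧ ((2 * r + m : ℤ) = i ∨ (2 * r + m : ℤ) = 2 * p - 1 - i ∨
      (2 * r + m : ℤ) = 2 * p + i) := by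
  rcases Int.even_or_odd ((i : ℤ) + m) with h | h
  · obtain ⟨s, hs⟩ := h
    rcases le_or_gt m i with hc | hc
    · exact ⟨(s - m).toNat, by omega, fun r' h' => by omega⟩
    · exact ⟨(s - m + p).toNat, by omega, fun r' h' => by omega⟩
  · obtain ⟨s, hs⟩ := h
    exact ⟨((p : ℤ) - 1 - s).toNat, by omega, fun r' h' => by omega⟩

private lemma key (p i r : ℕ) (b : ℝ) (hp : 0 < p) (hi : i < p) (hr : r < p)
    (hb0 : 0 < b) (hbp : b < p) (hβ0 : 0 < Int.fract b) :
    proj ((2 * r + b) / p) ∈ Ioo ((i : ℝ) / p) (((i : ℝ) + 1) / p) ↔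
      (2 * r + ⌊b⌋ = (i : ℤ) ∨ 2 * r + ⌊b⌋ = 2 * p - 1 - i ∨ 2 * r + ⌊b⌋ = 2 * p + i) := by
  have hp' : (0 : ℝ) < p := by exact_mod_cast hp
  set m : ℤ := ⌊b⌋ with hm
  set β : ℝ := Int.fract b with hβ
  have hβ1 : β < 1 := Int.fract_lt_one b
  have hbmβ : b = (m : ℝ) + β := by
    rw [hβ, Int.fract]; ring
  have hm0 : 0 ≤ m := Int.floor_nonneg.2 hb0.le
  have hmp : m < p := by
    have : b < ((p : ℤ) : ℝ) := by exact_mod_cast hbp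
    exact Int.floor_lt.2 this
  set M : ℤ := 2 * r + m with hM
  have hMr : 2 * (r : ℝ) + b = (M : ℝ) + β := by
    rw [hbmβ, hM]; push_cast; ring
  have hmemiff : proj ((2 * r + b) / p) ∈ Ioo ((i : ℝ) / p) (((i : ℝ) + 1) / p) ↔
      ((i : ℝ) < proj ((2 * r + b) / p) * p ∧ proj ((2 * r + b) / p) * p < (i : ℝ) + 1) := by
    rw [mem_Ioo, div_lt_iff₀ hp', lt_div_iff₀ hp']
  have hcast : ((i : ℕ) : ℝ) = (((i : ℕ) : ℤ) : ℝ) := by push_cast; ring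
  rcases lt_or_ge M p with h1 | h1
  · -- Case A : ⌊t⌋ = 0
    have hub : 2 * (r : ℝ) + b < p := by
      have : (M : ℝ) + 1 ≤ p := by exact_mod_cast h1
      rw [hMr]; linarith
    have hlb : (0 : ℝ) ≤ 2 * (r : ℝ) + b := by positivity
    have hft : ⌊(2 * (r : ℝ) + b) / p⌋ = 0 := by
      rw [Int.floor_eq_iff]
      constructor
      · push_cast; positivity
      · push_cast
        rw [div_lt_iff₀ hp']
        linarith
    have hpr : proj ((2 * (r : ℝ) + b) / p) = (2 * (r : ℝ) + b) / p := by
      rw [proj, hft]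
      simp [Int.fract, hft]
    rw [hmemiff, hpr, div_mul_cancel₀ _ hp'.ne', hMr, hcast, ioo_iff M i β hβ0 hβ1]
    omega
  · rcases lt_or_ge M (2 * p) with h2 | h2
    · -- Case B : ⌊t⌋ = 1
      have hlb : (p : ℝ) ≤ 2 * (r : ℝ) + b := by
        have : ((p : ℤ) : ℝ) ≤ (M : ℝ) := by exact_mod_cast h1
        rw [hMr]; push_cast at this ⊢; linarith
      have hub : 2 * (r : ℝ) + b < 2 * p := by
        have : (M : ℝ) + 1 ≤ 2 * p := by exact_mod_cast h2
        rw [hMr]; linarith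
      have hft : ⌊(2 * (r : ℝ) + b) / p⌋ = 1 := by
        rw [Int.floor_eq_iff]
        constructor
        · push_cast
          rw [le_div_iff₀ hp']
          linarith
        · push_cast
          rw [div_lt_iff₀ hp']
          linarith
      have hpr : proj ((2 * (r : ℝ) + b) / p) = 2 - (2 * (r : ℝ) + b) / p := by
        rw [proj, hft]
        simp [Int.fract, hft]
        ring
      have hval : proj ((2 * (r : ℝ) + b) / p) * p = ((2 * p - M - 1 : ℤ) : ℝ) + (1 - β) := by
        rw [hpr, sub_mul, div_mul_cancel₀ _ hp'.ne', hMr]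
        push_cast; ring
      rw [hmemiff, hval, hcast, ioo_iff (2 * p - M - 1) i (1 - β) (by linarith) (by linarith)]
      omega
    · -- Case C : ⌊t⌋ = 2
      have hM3 : M ≤ 3 * p - 3 := by omega
      have hlb : 2 * (p : ℝ) ≤ 2 * (r : ℝ) + b := by
        have : (2 * (p : ℤ) : ℝ) ≤ (M : ℝ) := by exact_mod_cast h2
        rw [hMr]; push_cast at this ⊢; linarith
      have hub : 2 * (r : ℝ) + b < 3 * p := by
        have : (M : ℝ) + 1 ≤ 3 * p - 2 := by exact_mod_cast (by omega : M + 1 ≤ 3 * (p : ℤ) - 2)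
        have hp1 : (1 : ℝ) ≤ p := by exact_mod_cast hp
        rw [hMr]; linarith
      have hft : ⌊(2 * (r : ℝ) + b) / p⌋ = 2 := by
        rw [Int.floor_eq_iff]
        constructor
        · push_cast
          rw [le_div_iff₀ hp']
          linarith
        · push_cast
          rw [div_lt_iff₀ hp']
          linarith
      have hpr : proj ((2 * (r : ℝ) + b) / p) = (2 * (r : ℝ) + b) / p - 2 := by
        rw [proj, hft]
        simp [Int.fract, hft]
      have hval : proj ((2 * (r : ℝ) + b) / p) * p = ((M - 2 * p : ℤ) : ℝ) + β := by
        rw [hpr, sub_mul, div_mul_cancel₀ _ hp'.ne', hMr]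
        push_cast; ring
      rw [hmemiff, hval, hcast, ioo_iff (M - 2 * p) i β hβ0 hβ1]
      omega

theorem stmt3 (p q : ℕ) (hp : 0 < p) (hq : 0 < q) (hpq : Nat.Coprime p q)
    (a : ℝ) (ha : a ∈ Ioo (0:ℝ) 1) (hns : ¬ ∃ m : ℤ, (p : ℝ) * a = m)
    (x : ℕ → ℝ) (hx : ∀ k, x k = 2 * k * q / p + a)
    (i : ℕ) (hi : i < p) :
    ∃! k : ℕ, k < p ∧ proj (x k) ∈ Ioo ((i : ℝ) / p) (((i : ℝ) + 1) / p) := by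
  have hp' : (0 : ℝ) < p := by exact_mod_cast hp
  set b : ℝ := (p : ℝ) * a with hb
  have hb0 : 0 < b := mul_pos hp' ha.1
  have hbp : b < p := by
    have := ha.2
    nlinarith
  have hβ0 : 0 < Int.fract b := by
    rw [Int.fract_pos]
    intro h
    exact hns ⟨⌊b⌋, h⟩
  have hm0 : 0 ≤ ⌊b⌋ := Int.floor_nonneg.2 hb0.le
  have hmp : ⌊b⌋ < p := Int.floor_lt.2 (by exact_mod_cast hbp)
  -- rewrite proj (x k) via periodicity
  have hxk : ∀ k : ℕ, proj (x k) = proj ((2 * ((k * q) % p : ℕ) + b) / p) := by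
    intro k
    set d : ℕ := k * q / p with hd
    set r : ℕ := k * q % p with hrr
    have hdm : (k : ℝ) * (q : ℝ) = (p : ℝ) * (d : ℝ) + (r : ℝ) := by
      exact_mod_cast (Nat.div_add_mod (k * q) p).symm
    have hdcast : (((d : ℕ) : ℤ) : ℝ) = (d : ℝ) := by push_cast; ring
    have hdecomp : x k = (2 * (r : ℕ) + b) / p + 2 * (((d : ℕ) : ℤ) : ℝ) := by
      rw [hx k, hb, hdcast]
      field_simp
      linear_combination (2 : ℝ) * hdm
    rw [hdecomp, proj_add_two_int]
  -- the arithmetic condition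
  have hcond : ∀ k : ℕ, proj (x k) ∈ Ioo ((i : ℝ) / p) (((i : ℝ) + 1) / p) ↔
      (2 * ((k * q) % p : ℕ) + ⌊b⌋ = (i : ℤ) ∨
       2 * ((k * q) % p : ℕ) + ⌊b⌋ = 2 * p - 1 - i ∨
       2 * ((k * q) % p : ℕ) + ⌊b⌋ = 2 * p + i) := by
    intro k
    rw [hxk k]
    exact key p i ((k * q) % p) b hp hi (Nat.mod_lt _ hp) hb0 hbp hβ0
  obtain ⟨r₀, ⟨hr₀p, hr₀⟩, hr₀u⟩ := exists_unique_r p i ⌊b⌋ hp hi hm0 hmp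
  haveI : NeZero p := ⟨hp.ne'⟩
  set u : (ZMod p)ˣ := ZMod.unitOfCoprime q hpq.symm with hu
  have hucoe : (u : ZMod p) = (q : ZMod p) := ZMod.coe_unitOfCoprime q hpq.symm
  set k₀ : ℕ := (((r₀ : ZMod p)) * ((u⁻¹ : (ZMod p)ˣ) : ZMod p)).val with hk₀
  have hk₀p : k₀ < p := ZMod.val_lt _
  have hk₀c : ((k₀ : ℕ) : ZMod p) = (r₀ : ZMod p) * ((u⁻¹ : (ZMod p)ˣ) : ZMod p) := by
    rw [hk₀, ZMod.natCast_val, ZMod.cast_id]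
  have hmod : (k₀ * q) % p = r₀ := by
    have hz : ((k₀ * q : ℕ) : ZMod p) = ((r₀ : ℕ) : ZMod p) := by
      push_cast
      rw [hk₀c, ← hucoe, mul_assoc]
      simp
    have hmodeq := (ZMod.natCast_eq_natCast_iff _ _ _).1 hz
    have := hmodeq.symm
    rwa [Nat.ModEq, Nat.mod_eq_of_lt hr₀p, eq_comm] at this
  -- injectivity of k ↦ k*q % p on [0,p)
  have hinj : ∀ k₁ k₂ : ℕ, k₁ < p → k₂ < p → (k₁ * q) % p = (k₂ * q) % p → k₁ = k₂ := by
    intro k₁ k₂ h₁ h₂ h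
    have hz : ((k₁ * q : ℕ) : ZMod p) = ((k₂ * q : ℕ) : ZMod p) :=
      (ZMod.natCast_eq_natCast_iff _ _ _).2 (by rwa [Nat.ModEq])
    push_cast at hz
    rw [← hucoe] at hz
    have hz2 : (k₁ : ZMod p) = (k₂ : ZMod p) := by
      have := congrArg (· * ((u⁻¹ : (ZMod p)ˣ) : ZMod p)) hz
      simpa [mul_assoc] using this
    have := congrArg ZMod.val hz2
    rwa [ZMod.val_cast_of_lt h₁, ZMod.val_cast_of_lt h₂] at this
  refine ⟨k₀, ⟨hk₀p, ?_⟩, ?_⟩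
  · rw [hcond k₀, hmod]
    exact hr₀
  · rintro k' ⟨hk'p, hk'⟩
    rw [hcond k'] at hk'
    have hr' : (k' * q) % p = r₀ := hr₀u _ ⟨Nat.mod_lt _ hp, hk'⟩
    exact hinj k' k₀ hk'p hk₀p (by rw [hr', hmod])
end

section
/- Let p, q be relatively prime positive integers and a ∈ (0,1) with pa ∉ ℤ. Define x_k = 2k·q/p + a for k ∈ {0,...,p-1}. If k ≠ l and ⌊x_k⌋ ≡ ⌊x_l⌋ (mod 2), then |frac(x_k) - frac(x_l)| ≥ 2/p. -/
open Set

theorem stmt4 (p q : ℕ) (hp : 0 < p) (hq : 0 < q) (hpq : Nat.Coprime p q)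
    (a : ℝ) (ha : a ∈ Ioo (0:ℝ) 1) (hns : ¬ ∃ m : ℤ, (p : ℝ) * a = m)
    (x : ℕ → ℝ) (hx : ∀ k, x k = 2 * k * q / p + a)
    (k l : ℕ) (hk : k < p) (hl : l < p) (hkl : k ≠ l)
    (hpar : ⌊x k⌋ % 2 = ⌊x l⌋ % 2) :
    2 / (p : ℝ) ≤ |Int.fract (x k) - Int.fract (x l)| := by
  have hp' : (0:ℝ) < p := by exact_mod_cast hp
  have hp0 : (p:ℝ) ≠ 0 := ne_of_gt hp'
  obtain ⟨m, hm⟩ : (2:ℤ) ∣ ⌊x l⌋ - ⌊x k⌋ := Int.ModEq.dvd hpar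
  set n : ℤ := ((k:ℤ) - l) * q + m * p with hn
  have hn0 : n ≠ 0 := by
    intro h
    have hdvd : (p:ℤ) ∣ ((k:ℤ) - l) * q := ⟨-m, by linarith [hn ▸ h]⟩
    have hcop : IsCoprime (p:ℤ) (q:ℤ) := Int.isCoprime_iff_gcd_eq_one.mpr (by simpa using hpq)
    have hdd : (p:ℤ) ∣ ((k:ℤ) - l) := hcop.dvd_of_dvd_mul_right hdvd
    have : ((k:ℤ) - l) = 0 := Int.eq_zero_of_abs_lt_dvd hdd (by
      rw [abs_lt]; constructor <;> [skip; skip] <;> omega)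
    exact hkl (by omega)
  have key : Int.fract (x k) - Int.fract (x l) = 2 * n / p := by
    obtain ⟨Fk, hFk⟩ : ∃ F : ℤ, ⌊x k⌋ = F := ⟨_, rfl⟩
    obtain ⟨Fl, hFl⟩ : ∃ F : ℤ, ⌊x l⌋ = F := ⟨_, rfl⟩
    have hcast : ((Fl : ℝ)) - Fk = 2 * m := by exact_mod_cast hFk ▸ hFl ▸ hm
    rw [Int.fract, Int.fract, hFk, hFl, hx k, hx l, hn]
    field_simp
    push_cast
    linear_combination (p : ℝ) * hcast
  rw [key, abs_div, abs_of_pos hp', abs_mul, abs_two]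
  have h1 : (1:ℝ) ≤ |(n:ℝ)| := by exact_mod_cast Int.one_le_abs hn0
  have : (2:ℝ) ≤ 2 * |(n:ℝ)| := by linarith
  gcongr
end

section
/- Let p, q be relatively prime positive integers and a ∈ (0,1) with pa ∉ ℤ. Define x_k = 2k·q/p + a. If ⌊x_k⌋ is even and ⌊x_l⌋ is odd, then p·(frac(x_k) + (1 - frac(x_l))) is an even integer; equivalently, the midpoint (frac(x_k) + (1 - frac(x_l)))/2 belongs to {0, 1/p, 2/p, ..., (p-1)/p, 1}. -/
open Set

theorem stmt5 (p q : ℕ) (hp : 0 < p) (hq : 0 < q) (hpq : Nat.Coprime p q)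
    (a : ℝ) (ha : a ∈ Ioo (0:ℝ) 1) (hns : ¬ ∃ m : ℤ, (p : ℝ) * a = m)
    (x : ℕ → ℝ) (hx : ∀ k, x k = 2 * k * q / p + a)
    (k l : ℕ) (hk : Even ⌊x k⌋) (hl : Odd ⌊x l⌋) :
    (∃ m : ℤ, (p : ℝ) * (Int.fract (x k) + (1 - Int.fract (x l))) = 2 * m) ∧
      ∃ i : ℕ, i ≤ p ∧ (Int.fract (x k) + (1 - Int.fract (x l))) / 2 = (i : ℝ) / p := by
  obtain ⟨u, hu⟩ := hk
  obtain ⟨v, hv⟩ := hl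
  have hp0 : (p : ℝ) ≠ 0 := Nat.cast_ne_zero.mpr hp.ne'
  set m : ℤ := (k : ℤ) * q - l * q + p * (v + 1 - u) with hm
  have key : (p : ℝ) * (Int.fract (x k) + (1 - Int.fract (x l))) = 2 * m := by
    rw [Int.fract, Int.fract, hu, hv, hx k, hx l, hm]
    push_cast
    field_simp
    ring
  have s := key
  have hsum_nonneg : 0 ≤ Int.fract (x k) + (1 - Int.fract (x l)) := by
    have := Int.fract_nonneg (x k)
    have := Int.fract_lt_one (x l)
    linarith
  have hsum_lt : Int.fract (x k) + (1 - Int.fract (x l)) < 2 := by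
    have := Int.fract_lt_one (x k)
    have := Int.fract_nonneg (x l)
    linarith
  have hm0 : (0 : ℝ) ≤ m := by
    have hpp : (0 : ℝ) < p := by positivity
    nlinarith
  have hmp : (m : ℝ) < p := by
    have hpp : (0 : ℝ) < p := by positivity
    nlinarith
  have hm0' : 0 ≤ m := by exact_mod_cast hm0
  refine ⟨⟨m, key⟩, m.toNat, ?_, ?_⟩
  · have : (m : ℝ) ≤ p := hmp.le
    have : m ≤ (p : ℤ) := by exact_mod_cast this
    omega
  · have hcast : ((m.toNat : ℕ) : ℝ) = (m : ℝ) := by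
      exact_mod_cast congrArg Int.cast (Int.toNat_of_nonneg hm0')
    rw [hcast]
    field_simp
    linarith [key]
end

section
/- Let ABCD be a rectangle and PQRS a parallelogram inscribed in ABCD with P on side AB, Q on side BC, R on side CD, S on side DA, and ∠QPB = θ ∈ (0, π/2). Then the infimum of radii r such that the open r-neighborhood of the boundary of PQRS contains ABCD equals max(|AP|·sin θ, |BP|·sin θ). -/
/-!
Write `s = sin θ`, `c = cos θ`, `t = tan θ`, so that `h = w t` and the sides of `PQRS` lie on the
lines `x s - y c = ± x₀ s`, `x s + y c = x₀ s` and `x s + y c = (2w - x₀) s`.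

Lower bound: the parallelogram lies in the half-plane `x s + y c ≥ x₀ s`, whose boundary is at
distance `x₀ s` from the corner `A`, and in the half-plane `x s - y c ≤ x₀ s`, at distance
`(w - x₀) s` from `B`.

Upper bound: the rectangle is covered by four boxes in pinwheel arrangement, one at each corner;
the one at `A` is `[0, x₀] × [0, x₀ t]`. From a point of that box the foot of the perpendicular to
`SP` lies on the segment `SP`, at distance at most `x₀ s`. The symmetries `(x, y) ↦ (w - x, y)`,
`(w - x, h - y)`, `(x, h - y)` of the rectangle carry the configuration to the one with `x₀` or
`w - x₀` in place of `x₀`, and the box at `A` to the boxes at `B`, `C`, `D`.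
-/

open Set

/-- A point of the Euclidean plane. -/
noncomputable def pt (x y : ℝ) : EuclideanSpace ℝ (Fin 2) := WithLp.toLp 2 ![x, y]

lemma pt_eta (z : EuclideanSpace ℝ (Fin 2)) : pt (z 0) (z 1) = z := by
  ext i; fin_cases i <;> rfl

lemma dist_pt (a b a' b' : ℝ) :
    dist (pt a b) (pt a' b') = √((a - a') ^ 2 + (b - b') ^ 2) := by
  simp [EuclideanSpace.dist_eq, Fin.sum_univ_two, pt, Real.dist_eq, sq_abs]

lemma inner_pt (a b a' b' : ℝ) : inner ℝ (pt a b) (pt a' b') = a * a' + b * b' := by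
  simp [pt, PiLp.inner_apply, Fin.sum_univ_two, mul_comm]

lemma norm_pt_eq_one {a b : ℝ} (h : a ^ 2 + b ^ 2 = 1) : ‖pt a b‖ = 1 := by
  simp [EuclideanSpace.norm_eq, Fin.sum_univ_two, pt, h]

lemma pt_mem_segment {a b x₁ y₁ x₂ y₂ μ : ℝ} (hμ₀ : 0 ≤ μ) (hμ₁ : μ ≤ 1)
    (ha : a = x₁ + μ * (x₂ - x₁)) (hb : b = y₁ + μ * (y₂ - y₁)) :
    pt a b ∈ segment ℝ (pt x₁ y₁) (pt x₂ y₂) := by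
  refine ⟨1 - μ, μ, by linarith, hμ₀, by ring, ?_⟩
  ext i; fin_cases i <;>
    simp only [pt, ha, hb, PiLp.add_apply, PiLp.smul_apply, smul_eq_mul, Fin.zero_eta, Fin.mk_one,
      Fin.isValue, Matrix.cons_val_zero, Matrix.cons_val_one, Matrix.cons_val_fin_one] <;> ring

lemma pt_affine_mem_segment (α β ε δ : ℝ) {a b x₁ y₁ x₂ y₂ : ℝ}
    (h : pt a b ∈ segment ℝ (pt x₁ y₁) (pt x₂ y₂)) :
    pt (α + ε * a) (β + δ * b) ∈
      segment ℝ (pt (α + ε * x₁) (β + δ * y₁)) (pt (α + ε * x₂) (β + δ * y₂)) := by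
  obtain ⟨p, q, hp, hq, hpq, hz⟩ := h
  have ha : p * x₁ + q * x₂ = a := by simpa [pt] using congrArg (· 0) hz
  have hb : p * y₁ + q * y₂ = b := by simpa [pt] using congrArg (· 1) hz
  refine ⟨p, q, hp, hq, hpq, ?_⟩
  ext i; fin_cases i <;>
    simp only [pt, PiLp.add_apply, PiLp.smul_apply, smul_eq_mul, Fin.zero_eta, Fin.mk_one,
      Fin.isValue, Matrix.cons_val_zero, Matrix.cons_val_one, Matrix.cons_val_fin_one]
  · linear_combination ε * ha + α * hpq
  · linear_combination δ * hb + β * hpq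

lemma dist_pt_affine {ε δ : ℝ} (hε : ε ^ 2 = 1) (hδ : δ ^ 2 = 1) (α β a b a' b' : ℝ) :
    dist (pt (α + ε * a) (β + δ * b)) (pt (α + ε * a') (β + δ * b')) =
      dist (pt a b) (pt a' b') := by
  simp only [dist_pt]
  congr 1
  linear_combination (a - a') ^ 2 * hε + (b - b') ^ 2 * hδ

lemma exists_mem_segment_dist_le_affine {ε δ : ℝ} (hε : ε ^ 2 = 1) (hδ : δ ^ 2 = 1) (α β : ℝ)
    {x y x₁ y₁ x₂ y₂ M : ℝ}
    (h : ∃ p ∈ segment ℝ (pt x₁ y₁) (pt x₂ y₂), dist (pt x y) p ≤ M) :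
    ∃ p ∈ segment ℝ (pt (α + ε * x₁) (β + δ * y₁)) (pt (α + ε * x₂) (β + δ * y₂)),
      dist (pt (α + ε * x) (β + δ * y)) p ≤ M := by
  obtain ⟨p, hp, hd⟩ := h
  rw [← pt_eta p] at hp hd
  exact ⟨_, pt_affine_mem_segment α β ε δ hp, (dist_pt_affine hε hδ ..).trans_le hd⟩

lemma exists_mem_segment_dist_le_of_corner {x₀ s c t x y : ℝ} (hx₀ : 0 < x₀) (hs : 0 < s)
    (hc : 0 < c) (hsc : s ^ 2 + c ^ 2 = 1) (ht : t * c = s) (hx : 0 ≤ x) (hy : 0 ≤ y)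
    (hxx₀ : x * s ≤ x₀ * s) (hyx₀ : y * c ≤ x₀ * s) :
    ∃ p ∈ segment ℝ (pt 0 (x₀ * t)) (pt x₀ 0), dist (pt x y) p ≤ x₀ * s := by
  -- signed distance from `(x, y)` to the line `SP`
  set d := x * s + y * c - x₀ * s with hd
  have hfoot_x : x - d * s = x * c ^ 2 + s * (x₀ * s - y * c) := by
    linear_combination (-x) * hsc
  have hfoot_x' : x₀ - (x - d * s) = (x₀ - x) * c ^ 2 + s * (y * c) := by
    linear_combination (x - x₀) * hsc
  have hxx₀' : x ≤ x₀ := le_of_mul_le_mul_right hxx₀ hs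
  refine ⟨pt (x - d * s) (y - d * c),
    pt_mem_segment (μ := (x - d * s) / x₀) ?_ ?_ ?_ ?_, ?_⟩
  · rw [hfoot_x]
    have : 0 ≤ x₀ * s - y * c := by linarith
    positivity
  · rw [div_le_one hx₀, ← sub_nonneg, hfoot_x']
    have : 0 ≤ x₀ - x := by linarith
    positivity
  · field_simp; ring
  · have hμ : (x - d * s) / x₀ * x₀ = x - d * s := div_mul_cancel₀ _ hx₀.ne'
    refine mul_right_cancel₀ hc.ne' ?_
    linear_combination ((x - d * s) / x₀ * x₀ - x₀) * ht + s * hμ - d * hsc - hd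
  · rw [dist_pt]
    have hdist : (x - (x - d * s)) ^ 2 + (y - (y - d * c)) ^ 2 = d ^ 2 := by
      linear_combination d ^ 2 * hsc
    rw [hdist, Real.sqrt_sq_eq_abs, abs_le]
    have hxs : 0 ≤ x * s := by positivity
    have hyc : 0 ≤ y * c := by positivity
    exact ⟨by linarith, by linarith⟩

lemma pinwheel_cover (X Y m W : ℝ) :
    (X ≤ m ∧ Y ≤ m) ∨ (m ≤ X ∧ Y ≤ W - m) ∨ (W - m ≤ X ∧ W - m ≤ Y) ∨ (X ≤ W - m ∧ m ≤ Y) := by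
  rcases le_total X m with hXm | hmX <;> rcases le_total Y m with hYm | hmY
  · exact Or.inl ⟨hXm, hYm⟩
  · rcases le_total X (W - m) with h | h
    · exact Or.inr (Or.inr (Or.inr ⟨h, hmY⟩))
    · exact Or.inr (Or.inr (Or.inl ⟨h, by linarith⟩))
  · rcases le_total Y (W - m) with h | h
    · exact Or.inr (Or.inl ⟨hmX, h⟩)
    · exact Or.inr (Or.inr (Or.inl ⟨by linarith, h⟩))
  · rcases le_total X (W - m) with h | h
    · exact Or.inr (Or.inr (Or.inr ⟨h, hmY⟩))
    · rcases le_total Y (W - m) with h' | h'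
      · exact Or.inr (Or.inl ⟨hmX, h'⟩)
      · exact Or.inr (Or.inr (Or.inl ⟨h, h'⟩))

lemma sub_inner_le_dist {E : Type*} [NormedAddCommGroup E] [InnerProductSpace ℝ E] {n p : E}
    {k : ℝ} (hn : ‖n‖ = 1) (hp : k ≤ inner ℝ n p) (a : E) : k - inner ℝ n a ≤ dist a p :=
  calc k - inner ℝ n a ≤ inner ℝ n (p - a) := by rw [inner_sub_right]; linarith
    _ ≤ ‖n‖ * ‖p - a‖ := real_inner_le_norm _ _
    _ = dist a p := by rw [hn, one_mul, dist_comm, dist_eq_norm]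

def rectangle (w h : ℝ) : Set (EuclideanSpace ℝ (Fin 2)) :=
  {z | z 0 ∈ Icc 0 w ∧ z 1 ∈ Icc 0 h}

def parallelogramBoundary (w x₀ t : ℝ) : Set (EuclideanSpace ℝ (Fin 2)) :=
  segment ℝ (pt x₀ 0) (pt w ((w - x₀) * t)) ∪
    segment ℝ (pt w ((w - x₀) * t)) (pt (w - x₀) (w * t)) ∪
    segment ℝ (pt (w - x₀) (w * t)) (pt 0 (x₀ * t)) ∪ segment ℝ (pt 0 (x₀ * t)) (pt x₀ 0)

lemma parallelogramBoundary_subset_halfSpace {w x₀ t k : ℝ} {n : EuclideanSpace ℝ (Fin 2)}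
    (hP : k ≤ inner ℝ n (pt x₀ 0)) (hQ : k ≤ inner ℝ n (pt w ((w - x₀) * t)))
    (hR : k ≤ inner ℝ n (pt (w - x₀) (w * t))) (hS : k ≤ inner ℝ n (pt 0 (x₀ * t))) :
    parallelogramBoundary w x₀ t ⊆ {z | k ≤ inner ℝ n z} := by
  have hK := convex_halfSpace_ge (innerₛₗ ℝ n).isLinear k
  exact union_subset (union_subset (union_subset (hK.segment_subset hP hQ)
    (hK.segment_subset hQ hR)) (hK.segment_subset hR hS)) (hK.segment_subset hS hP)

section

variable {w x₀ s c t : ℝ} (hx₀ : 0 < x₀) (hxw : x₀ < w) (hs : 0 < s) (hc : 0 < c)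
  (hsc : s ^ 2 + c ^ 2 = 1) (ht : t * c = s)
include hx₀ hxw hs hc hsc ht

lemma exists_mem_parallelogramBoundary_dist_le {x y : ℝ} (hx : 0 ≤ x) (hxw' : x ≤ w)
    (hy : 0 ≤ y) (hyw : y ≤ w * t) :
    ∃ p ∈ parallelogramBoundary w x₀ t, dist (pt x y) p ≤ max (x₀ * s) ((w - x₀) * s) := by
  have hM₁ : x₀ * s ≤ max (x₀ * s) ((w - x₀) * s) := le_max_left _ _
  have hM₂ : (w - x₀) * s ≤ max (x₀ * s) ((w - x₀) * s) := le_max_right _ _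
  have hwtc : w * t * c = w * s := by rw [mul_assoc, ht]
  have hwx₀ : 0 < w - x₀ := sub_pos.mpr hxw
  rcases pinwheel_cover (x * s) (y * c) (x₀ * s) (w * s) with
    ⟨h₁, h₂⟩ | ⟨h₁, h₂⟩ | ⟨h₁, h₂⟩ | ⟨h₁, h₂⟩
  · obtain ⟨p, hp, hd⟩ := exists_mem_segment_dist_le_of_corner hx₀ hs hc hsc ht hx hy h₁ h₂
    exact ⟨p, Or.inr hp, hd.trans hM₁⟩
  · obtain ⟨p, hp, hd⟩ := exists_mem_segment_dist_le_affine (ε := -1) (δ := 1) (by norm_num)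
      (by norm_num) w 0 (exists_mem_segment_dist_le_of_corner (x := w - x) hwx₀ hs hc hsc ht
        (by linarith) hy (by linarith) (by linarith))
    refine ⟨p, Or.inl (Or.inl (Or.inl ?_)), ?_⟩
    · rw [segment_symm]; convert hp using 2 <;> congr 1 <;> ring
    · convert hd.trans hM₂ using 2 <;> congr 1 <;> ring
  · obtain ⟨p, hp, hd⟩ := exists_mem_segment_dist_le_affine (ε := -1) (δ := -1) (by norm_num)
      (by norm_num) w (w * t) (exists_mem_segment_dist_le_of_corner (x := w - x)
        (y := w * t - y) hx₀ hs hc hsc ht (by linarith) (by linarith) (by linarith)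
        (by linarith))
    refine ⟨p, Or.inl (Or.inl (Or.inr ?_)), ?_⟩
    · convert hp using 2 <;> congr 1 <;> ring
    · convert hd.trans hM₁ using 2 <;> congr 1 <;> ring
  · obtain ⟨p, hp, hd⟩ := exists_mem_segment_dist_le_affine (ε := 1) (δ := -1) (by norm_num)
      (by norm_num) 0 (w * t) (exists_mem_segment_dist_le_of_corner (x := x)
        (y := w * t - y) hwx₀ hs hc hsc ht hx (by linarith) (by linarith) (by linarith))
    refine ⟨p, Or.inl (Or.inr ?_), ?_⟩
    · rw [segment_symm]; convert hp using 2 <;> congr 1 <;> ring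
    · convert hd.trans hM₂ using 2 <;> congr 1 <;> ring

lemma max_lt_of_rectangle_subset_thickening {r : ℝ}
    (h : rectangle w (w * t) ⊆ Metric.thickening r (parallelogramBoundary w x₀ t)) :
    max (x₀ * s) ((w - x₀) * s) < r := by
  have hct (b : ℝ) : c * (b * t) = b * s := by linear_combination b * ht
  have hsw : x₀ * s < w * s := mul_lt_mul_of_pos_right hxw hs
  have hx₀s : 0 < x₀ * s := by positivity
  have hwt : 0 ≤ w * t := by nlinarith
  have hw : 0 ≤ w := (hx₀.trans hxw).le
  have hA : pt 0 0 ∈ rectangle w (w * t) := by simp [rectangle, pt, hw, hwt]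
  have hB : pt w 0 ∈ rectangle w (w * t) := by simp [rectangle, pt, hw, hwt]
  obtain ⟨p, hp, hpA⟩ := Metric.mem_thickening_iff.mp (h hA)
  obtain ⟨q, hq, hqB⟩ := Metric.mem_thickening_iff.mp (h hB)
  have hp' := parallelogramBoundary_subset_halfSpace (n := pt s c) (k := x₀ * s)
    (by rw [inner_pt]; linarith) (by rw [inner_pt, hct]; linarith)
    (by rw [inner_pt, hct]; linarith) (by rw [inner_pt, hct]; linarith) hp
  have hq' := parallelogramBoundary_subset_halfSpace (n := pt (-s) c) (k := -(x₀ * s))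
    (by rw [inner_pt]; linarith) (by rw [inner_pt, hct]; linarith)
    (by rw [inner_pt, hct]; linarith) (by rw [inner_pt, hct]; linarith) hq
  have hdA := sub_inner_le_dist (norm_pt_eq_one hsc) hp' (pt 0 0)
  have hdB := sub_inner_le_dist (norm_pt_eq_one (by linear_combination hsc)) hq' (pt w 0)
  rw [inner_pt] at hdA hdB
  exact max_lt (by linarith) (by linarith)

lemma rectangle_subset_thickening_iff {r : ℝ} :
    rectangle w (w * t) ⊆ Metric.thickening r (parallelogramBoundary w x₀ t) ↔
      max (x₀ * s) ((w - x₀) * s) < r := by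
  refine ⟨max_lt_of_rectangle_subset_thickening hx₀ hxw hs hc hsc ht, fun hr z hz => ?_⟩
  obtain ⟨⟨hz₀, hz₀'⟩, ⟨hz₁, hz₁'⟩⟩ := hz
  obtain ⟨p, hp, hd⟩ :=
    exists_mem_parallelogramBoundary_dist_le hx₀ hxw hs hc hsc ht hz₀ hz₀' hz₁ hz₁'
  rw [pt_eta] at hd
  exact Metric.mem_thickening_iff.mpr ⟨p, hp, hd.trans_lt hr⟩

end

theorem stmt6_general (w h θ x₀ : ℝ)
    (hθ : θ ∈ Ioo (0:ℝ) (Real.pi / 2)) (htan : Real.tan θ = h / w)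
    (hx₀ : x₀ ∈ Ioo (0:ℝ) w)
    (P Q R S : EuclideanSpace ℝ (Fin 2))
    (hP : P = pt x₀ 0) (hQ : Q = pt w ((w - x₀) * Real.tan θ))
    (hR : R = pt (w - x₀) h) (hS : S = pt 0 (x₀ * Real.tan θ)) :
    sInf {r : ℝ | 0 < r ∧
        {z : EuclideanSpace ℝ (Fin 2) | z 0 ∈ Icc (0:ℝ) w ∧ z 1 ∈ Icc (0:ℝ) h} ⊆
          Metric.thickening r
            (segment ℝ P Q ∪ segment ℝ Q R ∪ segment ℝ R S ∪ segment ℝ S P)} =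
      max (x₀ * Real.sin θ) ((w - x₀) * Real.sin θ) := by
  obtain ⟨hθ₀, hθ₁⟩ := hθ
  obtain ⟨hx₀, hxw⟩ := hx₀
  have hs : 0 < Real.sin θ := Real.sin_pos_of_pos_of_lt_pi hθ₀ (by linarith [Real.pi_pos])
  have hc : 0 < Real.cos θ := Real.cos_pos_of_mem_Ioo ⟨by linarith [Real.pi_pos], hθ₁⟩
  have ht : Real.tan θ * Real.cos θ = Real.sin θ := by
    rw [Real.tan_eq_sin_div_cos, div_mul_cancel₀ _ hc.ne']
  have hhw : h = w * Real.tan θ := by rw [htan, mul_div_cancel₀ h (hx₀.trans hxw).ne']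
  subst hP hQ hR hS hhw
  have hiff (r : ℝ) :=
    rectangle_subset_thickening_iff (r := r) hx₀ hxw hs hc (Real.sin_sq_add_cos_sq θ) ht
  have hM : 0 < max (x₀ * Real.sin θ) ((w - x₀) * Real.sin θ) :=
    lt_max_of_lt_left (by positivity)
  have hset : {r : ℝ | 0 < r ∧ rectangle w (w * Real.tan θ) ⊆
      Metric.thickening r (parallelogramBoundary w x₀ (Real.tan θ))} =
      Ioi (max (x₀ * Real.sin θ) ((w - x₀) * Real.sin θ)) := by
    ext r
    exact ⟨fun hr => (hiff r).mp hr.2, fun hr => ⟨hM.trans hr, (hiff r).mpr hr⟩⟩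
  exact (congrArg sInf hset).trans csInf_Ioi

/-- Rectangle ABCD with A=(0,0), B=(w,0), C=(w,h), D=(0,h); the inscribed parallelogram PQRS
has P = (x₀, 0) on AB, sides of slope ±tan θ, which forces tan θ = h/w, and then
Q = (w, (w-x₀) tan θ) on BC, R = (w-x₀, h) on CD, S = (0, x₀ tan θ) on DA. -/
theorem stmt6 (w h θ x₀ : ℝ) (hw : 0 < w) (hh : 0 < h)
    (hθ : θ ∈ Ioo (0:ℝ) (Real.pi / 2)) (htan : Real.tan θ = h / w)
    (hx₀ : x₀ ∈ Ioo (0:ℝ) w)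
    (P Q R S : EuclideanSpace ℝ (Fin 2))
    (hP : P = pt x₀ 0) (hQ : Q = pt w ((w - x₀) * Real.tan θ))
    (hR : R = pt (w - x₀) h) (hS : S = pt 0 (x₀ * Real.tan θ)) :
    sInf {r : ℝ | 0 < r ∧
        {z : EuclideanSpace ℝ (Fin 2) | z 0 ∈ Icc (0:ℝ) w ∧ z 1 ∈ Icc (0:ℝ) h} ⊆
          Metric.thickening r
            (segment ℝ P Q ∪ segment ℝ Q R ∪ segment ℝ R S ∪ segment ℝ S P)} =
      max (x₀ * Real.sin θ) ((w - x₀) * Real.sin θ) :=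
  stmt6_general w h θ x₀ hθ htan hx₀ P Q R S hP hQ hR hS
end

section
/- Let p, q be relatively prime positive integers and a ∈ (0,1) with pa ∉ ℤ. Define x_k = 2k·q/p + a and π(x) = frac(x) if ⌊x⌋ even, 1 - frac(x) if ⌊x⌋ odd. Then for any k, l ∈ {0,...,p-1}, p·(π(x_k) + π(x_l)) is an integer or p·(π(x_k) - π(x_l)) is an even integer; in particular p·π(x_k) is never an integer. -/
open Set

theorem stmt13 (p q : ℕ) (hp : 0 < p) (hq : 0 < q) (hpq : Nat.Coprime p q)
    (a : ℝ) (ha : a ∈ Ioo (0:ℝ) 1) (hns : ¬ ∃ m : ℤ, (p : ℝ) * a = m)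
    (x : ℕ → ℝ) (hx : ∀ k, x k = 2 * k * q / p + a)
    (k l : ℕ) (hk : k < p) (hl : l < p) :
    ((∃ m : ℤ, (p : ℝ) * (proj (x k) + proj (x l)) = m) ∨
      (∃ m : ℤ, (p : ℝ) * (proj (x k) - proj (x l)) = 2 * m)) ∧
    ¬ ∃ m : ℤ, (p : ℝ) * proj (x k) = m := by
  have hp0 : (p : ℝ) ≠ 0 := Nat.cast_ne_zero.2 hp.ne'
  have key : ∀ j : ℕ, (p : ℝ) * Int.fract (x j)
      = 2 * j * q - p * ⌊x j⌋ + p * a := by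
    intro j
    rw [Int.fract, hx]
    field_simp
    ring
  constructor
  · by_cases hk' : Even ⌊x k⌋ <;> by_cases hl' : Even ⌊x l⌋
    · -- both even
      right
      obtain ⟨r, hr⟩ := hl'.sub hk'
      refine ⟨(q : ℤ) * k - q * l + p * r, ?_⟩
      simp only [proj, if_pos hk', if_pos hl', mul_sub, key]
      have : ((⌊x l⌋ - ⌊x k⌋ : ℤ) : ℝ) = ((r + r : ℤ) : ℝ) := by rw [hr]
      push_cast at this ⊢
      have h2 : (p:ℝ) * ((⌊x l⌋:ℝ) - ⌊x k⌋) = p * (r + r) := by rw [this]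
      linarith
    · left
      refine ⟨2 * (q : ℤ) * k - p * ⌊x k⌋ + p - 2 * q * l + p * ⌊x l⌋, ?_⟩
      simp only [proj, if_pos hk', if_neg hl', mul_add, mul_sub, mul_one, key]
      push_cast
      ring
    · left
      refine ⟨2 * (q : ℤ) * l - p * ⌊x l⌋ + p - 2 * q * k + p * ⌊x k⌋, ?_⟩
      simp only [proj, if_neg hk', if_pos hl', mul_add, mul_sub, mul_one, key]
      push_cast
      ring
    · right
      rw [Int.not_even_iff_odd] at hk' hl'
      obtain ⟨r, hr⟩ := hk'.sub_odd hl'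
      refine ⟨(q : ℤ) * l - q * k + p * r, ?_⟩
      simp only [proj, if_neg (Int.not_even_iff_odd.2 hk'),
        if_neg (Int.not_even_iff_odd.2 hl'), mul_sub, mul_one, key]
      have : ((⌊x k⌋ - ⌊x l⌋ : ℤ) : ℝ) = ((r + r : ℤ) : ℝ) := by rw [hr]
      push_cast at this ⊢
      have h2 : (p:ℝ) * ((⌊x k⌋:ℝ) - ⌊x l⌋) = p * (r + r) := by rw [this]
      linarith
  · rintro ⟨m, hm⟩
    apply hns
    by_cases hk' : Even ⌊x k⌋
    · rw [proj, if_pos hk'] at hm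
      refine ⟨m - 2 * q * k + p * ⌊x k⌋, ?_⟩
      have := key k
      push_cast
      linarith
    · rw [proj, if_neg hk'] at hm
      refine ⟨(p : ℤ) - 2 * q * k + p * ⌊x k⌋ - m, ?_⟩
      have := key k
      push_cast
      linarith [mul_sub (p : ℝ) 1 (Int.fract (x k))]
end

section
/- Let p, q be relatively prime positive integers and a ∈ (0,1) with pa ∉ ℤ. Let h₁ < h₂ < ... < h_p be the x-coordinates of the bouncing points of γ(a, p/q) on the bottom edge of the unit square, ordered increasingly. Then (i-1)/p < h_i < i/p for every i, and (h_i + h_{i+1})/2 = i/p for every i ∈ {1, ..., p-1}. -/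
/-!
Write `p a = M + α` with `M ∈ ℕ` and `0 < α < 1` (`α ≠ 0` because `p a ∉ ℤ`), so that
`x_k = (n_k + α) / p` with `n_k = 2 k q + M`. Since `proj` has period `2`, `proj (x_k)` only
depends on `n_k mod 2p`, and as `k` runs over `0, …, p - 1` these residues are exactly the `p`
residues of the parity of `M` (`q` is invertible mod `p`). Folding `[0, 2)` onto `[0, 1]` sends
the residue `r` to the subinterval of index `i = r` or `i = 2p - 1 - r`, at offset `α` or `1 - α`
from its left end, and which offset occurs is decided by the parity of `i`. Hence
`h_{i+1} = (i + α) / p` and `(i + 1 - α) / p` alternately, which gives both claims.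
-/

open Set

lemma proj_add_two_mul_natCast (x : ℝ) (m : ℕ) : proj (x + 2 * m) = proj x := by
  have h : x + 2 * m = x + ((2 * m : ℤ) : ℝ) := by push_cast; ring
  simp only [proj, h, Int.floor_add_intCast, Int.fract_add_intCast, Int.even_add,
    even_two_mul, iff_true]

lemma proj_of_mem_Ico_zero_one {x : ℝ} (hx : x ∈ Ico 0 1) : proj x = x := by
  have hfloor : ⌊x⌋ = 0 := Int.floor_eq_zero_iff.2 hx
  simp [proj, Int.fract, hfloor]

lemma proj_of_mem_Ico_one_two {x : ℝ} (hx : x ∈ Ico 1 2) : proj x = 2 - x := by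
  have hfloor : ⌊x⌋ = 1 := Int.floor_eq_iff.2 ⟨by exact_mod_cast hx.1, by exact_mod_cast hx.2⟩
  simp only [proj, hfloor, Int.not_even_one, ↓reduceIte, Int.fract, Int.cast_one]
  ring

/-- For `r < 2 * p`, `proj` maps `[r / p, (r + 1) / p)` onto the subinterval of index
`foldIndex p r` of `[0, 1]`. -/
def foldIndex (p r : ℕ) : ℕ := if r < p then r else 2 * p - 1 - r

lemma foldIndex_lt {p r : ℕ} (hr : r < 2 * p) : foldIndex p r < p := by
  unfold foldIndex
  split_ifs <;> omega

lemma eq_of_foldIndex_eq {p r r' : ℕ} (hr : r < 2 * p) (hr' : r' < 2 * p)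
    (hpar : r % 2 = r' % 2) (h : foldIndex p r = foldIndex p r') : r = r' := by
  unfold foldIndex at h
  split_ifs at h <;> omega

/-- With `p * a = M + α`, this is the paper's `h_{i+1}`. -/
noncomputable def bouncePoint (p M : ℕ) (α : ℝ) (i : ℕ) : ℝ :=
  (i + if i % 2 = M % 2 then α else 1 - α) / p

section BouncePoint

variable {p : ℕ} {α : ℝ}

lemma bouncePoint_mem_Ioo (hp : 0 < p) (hα : α ∈ Ioo 0 1) (M i : ℕ) :
    bouncePoint p M α i ∈ Ioo ((i : ℝ) / p) ((i + 1) / p) := by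
  have hp' : (0 : ℝ) < p := by exact_mod_cast hp
  obtain ⟨hα0, hα1⟩ := hα
  unfold bouncePoint
  constructor <;> gcongr <;> split_ifs <;> linarith

lemma strictMono_bouncePoint (hp : 0 < p) (hα : α ∈ Ioo 0 1) (M : ℕ) :
    StrictMono fun i : Fin p ↦ bouncePoint p M α i := by
  intro i j hij
  have hp' : (0 : ℝ) < p := by exact_mod_cast hp
  have hij' : ((i : ℕ) : ℝ) + 1 ≤ (j : ℕ) := by exact_mod_cast hij
  calc bouncePoint p M α i < ((i : ℕ) + 1) / p := (bouncePoint_mem_Ioo hp hα M i).2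
    _ ≤ (j : ℕ) / p := by gcongr
    _ < bouncePoint p M α j := (bouncePoint_mem_Ioo hp hα M j).1

lemma bouncePoint_add_bouncePoint_succ (M i : ℕ) :
    bouncePoint p M α i + bouncePoint p M α (i + 1) = 2 * ((i : ℝ) + 1) / p := by
  unfold bouncePoint
  rw [← add_div]
  congr 1
  split_ifs <;> push_cast <;> first | omega | ring

lemma proj_div_eq_bouncePoint (hp : 0 < p) (hα0 : 0 ≤ α) (hα1 : α < 1) {n M : ℕ}
    (hnM : n % 2 = M % 2) :
    proj ((n + α) / p) = bouncePoint p M α (foldIndex p (n % (2 * p))) := by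
  have hp' : (0 : ℝ) < p := by exact_mod_cast hp
  set r := n % (2 * p) with hr
  have hr2p : r < 2 * p := Nat.mod_lt _ (by omega)
  have hrM : r % 2 = M % 2 := by rw [hr, Nat.mod_mod_of_dvd _ (dvd_mul_right 2 p), hnM]
  have hn : ((n : ℝ) + α) / p = (r + α) / p + 2 * ((n / (2 * p) : ℕ) : ℝ) := by
    have hcast : (n : ℝ) = r + 2 * p * ((n / (2 * p) : ℕ) : ℝ) := by
      exact_mod_cast (Nat.mod_add_div n (2 * p)).symm
    rw [hcast]
    field_simp
    ring
  rw [hn, proj_add_two_mul_natCast, foldIndex, bouncePoint]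
  by_cases hrp : r < p
  · rw [if_pos hrp, if_pos hrM, proj_of_mem_Ico_zero_one]
    constructor
    · positivity
    · rw [div_lt_one hp']
      have : (r : ℝ) + 1 ≤ p := by exact_mod_cast hrp
      linarith
  · rw [if_neg hrp, if_neg (by omega), proj_of_mem_Ico_one_two]
    · rw [Nat.cast_sub (by omega), Nat.cast_sub (by omega)]
      field_simp
      push_cast
      ring
    · constructor
      · rw [one_le_div hp']
        have : (p : ℝ) ≤ r := by exact_mod_cast not_lt.1 hrp
        linarith
      · rw [div_lt_iff₀ hp']
        have : (r : ℝ) + 1 ≤ 2 * p := by exact_mod_cast hr2p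
        linarith

end BouncePoint

lemma eq_of_two_mul_mul_add_mod_eq {p q M k k' : ℕ} (hpq : p.Coprime q) (hk : k < p)
    (hk' : k' < p) (h : (2 * k * q + M) % (2 * p) = (2 * k' * q + M) % (2 * p)) : k = k' := by
  have h1 : 2 * (k * q) ≡ 2 * (k' * q) [MOD 2 * p] := by
    simpa only [mul_assoc] using Nat.ModEq.add_right_cancel' M h
  exact ((Nat.ModEq.mul_left_cancel' two_ne_zero h1).cancel_right_of_coprime hpq).eq_of_lt_of_lt
    hk hk'

lemma exists_foldIndex_eq {p q : ℕ} (hp : 0 < p) (hpq : p.Coprime q) (M : ℕ) {i : ℕ}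
    (hi : i < p) : ∃ k < p, foldIndex p ((2 * k * q + M) % (2 * p)) = i := by
  have hmod : ∀ k, (2 * k * q + M) % (2 * p) < 2 * p := fun k ↦ Nat.mod_lt _ (by omega)
  have hpar : ∀ k, (2 * k * q + M) % (2 * p) % 2 = M % 2 := fun k ↦ by
    rw [Nat.mod_mod_of_dvd _ (dvd_mul_right 2 p), mul_assoc]
    omega
  obtain ⟨k, hk, hki⟩ := Finset.surj_on_of_inj_on_of_card_le
    (s := Finset.range p) (t := Finset.range p)
    (fun k _ ↦ foldIndex p ((2 * k * q + M) % (2 * p)))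
    (fun k _ ↦ Finset.mem_range.2 (foldIndex_lt (hmod k)))
    (fun k k' hk hk' h ↦ eq_of_two_mul_mul_add_mod_eq hpq (Finset.mem_range.1 hk)
      (Finset.mem_range.1 hk') (eq_of_foldIndex_eq (hmod k) (hmod k')
        ((hpar k).trans (hpar k').symm) h))
    le_rfl i (Finset.mem_range.2 hi)
  exact ⟨k, Finset.mem_range.1 hk, hki.symm⟩

lemma setOf_proj_eq_range_bouncePoint {p q : ℕ} (hp : 0 < p) (hpq : p.Coprime q) (M : ℕ)
    {α : ℝ} (hα0 : 0 ≤ α) (hα1 : α < 1) :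
    {y : ℝ | ∃ k : ℕ, k < p ∧ y = proj (((2 * k * q + M : ℕ) + α) / p)} =
      range fun i : Fin p ↦ bouncePoint p M α i := by
  have hpar : ∀ k, (2 * k * q + M) % 2 = M % 2 := fun k ↦ by rw [mul_assoc]; omega
  ext y
  constructor
  · rintro ⟨k, -, rfl⟩
    rw [proj_div_eq_bouncePoint hp hα0 hα1 (hpar k)]
    exact ⟨⟨_, foldIndex_lt (Nat.mod_lt _ (by omega))⟩, rfl⟩
  · rintro ⟨i, rfl⟩
    obtain ⟨k, hk, hki⟩ := exists_foldIndex_eq hp hpq M i.2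
    exact ⟨k, hk, by rw [proj_div_eq_bouncePoint hp hα0 hα1 (hpar k), hki]⟩

theorem stmt19_general (p q : ℕ) (hp : 0 < p) (hpq : Nat.Coprime p q)
    (a : ℝ) (ha : a ∈ Ioo (0:ℝ) 1) (hns : ¬ ∃ m : ℤ, (p : ℝ) * a = m)
    (x : ℕ → ℝ) (hx : ∀ k, x k = 2 * k * q / p + a)
    (h : Fin p → ℝ) (hmono : StrictMono h)
    (hrange : Set.range h = {y : ℝ | ∃ k : ℕ, k < p ∧ y = proj (x k)}) :
    (∀ i : Fin p, (i : ℝ) / p < h i ∧ h i < ((i : ℝ) + 1) / p) ∧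
    ∀ i : ℕ, ∀ hi : i + 1 < p,
      (h ⟨i, Nat.lt_of_succ_lt hi⟩ + h ⟨i + 1, hi⟩) / 2 = ((i : ℝ) + 1) / p := by
  have hp' : (0 : ℝ) < p := by exact_mod_cast hp
  set M := ⌊(p : ℝ) * a⌋₊
  set α := (p : ℝ) * a - M with hα
  have hα0 : 0 < α := by
    refine sub_pos.2 (lt_of_le_of_ne (Nat.floor_le (mul_nonneg hp'.le ha.1.le)) fun heq ↦
      hns ⟨M, ?_⟩)
    exact_mod_cast heq.symm
  have hα1 : α < 1 := by linarith [Nat.lt_floor_add_one ((p : ℝ) * a)]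
  have hxk : ∀ k, x k = ((2 * k * q + M : ℕ) + α) / p := fun k ↦ by
    rw [hx, hα]; field_simp; push_cast; ring
  have hh : h = fun i : Fin p ↦ bouncePoint p M α i := by
    refine (hmono.range_inj (strictMono_bouncePoint hp ⟨hα0, hα1⟩ M)).1 ?_
    simp only [hrange, hxk, setOf_proj_eq_range_bouncePoint hp hpq M hα0.le hα1]
  subst hh
  refine ⟨fun i ↦ bouncePoint_mem_Ioo hp ⟨hα0, hα1⟩ M i, fun i hi ↦ ?_⟩
  rw [bouncePoint_add_bouncePoint_succ]
  ring

theorem stmt19 (p q : ℕ) (hp : 0 < p) (hq : 0 < q) (hpq : Nat.Coprime p q)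
    (a : ℝ) (ha : a ∈ Ioo (0:ℝ) 1) (hns : ¬ ∃ m : ℤ, (p : ℝ) * a = m)
    (x : ℕ → ℝ) (hx : ∀ k, x k = 2 * k * q / p + a)
    (h : Fin p → ℝ) (hmono : StrictMono h)
    (hrange : Set.range h = {y : ℝ | ∃ k : ℕ, k < p ∧ y = proj (x k)}) :
    (∀ i : Fin p, (i : ℝ) / p < h i ∧ h i < ((i : ℝ) + 1) / p) ∧
    ∀ i : ℕ, ∀ hi : i + 1 < p,
      (h ⟨i, Nat.lt_of_succ_lt hi⟩ + h ⟨i + 1, hi⟩) / 2 = ((i : ℝ) + 1) / p :=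
  stmt19_general p q hp hpq a ha hns x hx h hmono hrange
end
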